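/- arXiv:0807.4846 — 8 statements merged into one kernel-verified Lean document; each statement's English description precedes it below -/
import Mathlib

section
/- If X and Y are subspaces of F_q^n with identifying vectors v(X) and v(Y), then d_S(X,Y) ≥ d_H(v(X), v(Y)), where d_S is the subspace distance and d_H is the Hamming distance. -/
/-! The first nonzero entry of a nonzero vector in the row space of a reduced echelon matrix
lies in a pivot column. So a nonzero vector of `X ⊓ Y` cannot vanish on the common pivot
columns of `X` and `Y`: restriction to those columns is injective on `X ⊓ Y`, whence
`dim (X ⊓ Y) ≤ #(supp v(X) ∩ supp v(Y))`. Together with `dim X = #(supp v(X))` and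
`d_H(u, w) + 2 #(supp u ∩ supp w) = #(supp u) + #(supp w)` this is the inequality. -/

open Module

/-- The subspace distance `d_S(U,V) = dim U + dim V - 2 dim (U ⊓ V)`. -/
noncomputable def subspaceDist {F M : Type*} [Field F] [AddCommGroup M] [Module F M]
    (U V : Submodule F M) : ℤ :=
  (finrank F U : ℤ) + (finrank F V : ℤ) - 2 * (finrank F ↥(U ⊓ V) : ℤ)

/-- `v : Fin n → Bool` is the identifying vector of the subspace `X` of `F_q^n`:
its ones are exactly the pivot positions of a generator matrix of `X` in reduced row
echelon form. -/
def IsIdentifyingVector {F : Type*} [Field F] {n : ℕ}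
    (X : Submodule F (Fin n → F)) (v : Fin n → Bool) : Prop :=
  ∃ (k : ℕ) (M : Matrix (Fin k) (Fin n) F) (p : Fin k → Fin n),
    StrictMono p ∧
    (∀ i, M i (p i) = 1) ∧
    (∀ i j, j < p i → M i j = 0) ∧
    (∀ i i', i' ≠ i → M i' (p i) = 0) ∧
    LinearIndependent F (fun i => M i) ∧
    Submodule.span F (Set.range fun i => M i) = X ∧
    (∀ j, v j = true ↔ ∃ i, p i = j)

open Finset

structure IsReducedEchelon {F : Type*} [Field F] {k n : ℕ} (M : Matrix (Fin k) (Fin n) F)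
    (p : Fin k → Fin n) : Prop where
  strictMono : StrictMono p
  apply_pivot : ∀ i, M i (p i) = 1
  eq_zero_of_lt_pivot : ∀ i j, j < p i → M i j = 0
  pivot_column_eq_zero : ∀ i i', i' ≠ i → M i' (p i) = 0

namespace IsReducedEchelon

variable {F : Type*} [Field F] {k n : ℕ} {M : Matrix (Fin k) (Fin n) F} {p : Fin k → Fin n}

lemma sum_smul_apply_pivot (hE : IsReducedEchelon M p) (c : Fin k → F) (i : Fin k) :
    (∑ i', c i' • M i') (p i) = c i := by
  rw [Finset.sum_apply, sum_eq_single i]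
  · simp [hE.apply_pivot]
  · intro i' _ hi'
    simp [hE.pivot_column_eq_zero i i' hi']
  · simp

lemma sum_smul_apply_eq_zero (hE : IsReducedEchelon M p) {c : Fin k → F} {i : Fin k}
    (hc : ∀ i', c i' ≠ 0 → i ≤ i') {j : Fin n} (hj : j < p i) :
    (∑ i', c i' • M i') j = 0 := by
  rw [Finset.sum_apply]
  refine sum_eq_zero fun i' _ => ?_
  by_cases hci' : c i' = 0
  · simp [hci']
  · have : j < p i' := hj.trans_le (hE.strictMono.monotone (hc i' hci'))
    simp [hE.eq_zero_of_lt_pivot i' j this]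

lemma exists_pivot_eq_of_mem_span (hE : IsReducedEchelon M p) {z : Fin n → F}
    (hz : z ∈ Submodule.span F (Set.range fun i => M i)) {j : Fin n} (hj : z j ≠ 0)
    (hlt : ∀ j' < j, z j' = 0) : ∃ i, p i = j := by
  obtain ⟨c, rfl⟩ := (Submodule.mem_span_range_iff_exists_fun F).mp hz
  have hc : c ≠ 0 := by
    rintro rfl
    simp at hj
  obtain ⟨i, hci, hmin⟩ := wellFounded_lt.has_min {i | c i ≠ 0} (Function.ne_iff.mp hc)
  have hmin' : ∀ i', c i' ≠ 0 → i ≤ i' := fun i' hi' => not_lt.mp (hmin i' hi')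
  refine ⟨i, le_antisymm ?_ ?_⟩
  · by_contra! h
    exact hj (hE.sum_smul_apply_eq_zero hmin' h)
  · by_contra! h
    exact hci ((hE.sum_smul_apply_pivot c i).symm.trans (hlt _ h))

end IsReducedEchelon

lemma Submodule.finrank_le_card_of_forall_apply_eq_zero {F ι : Type*} [Field F]
    [Fintype ι] {W : Submodule F (ι → F)} (s : Finset ι)
    (h : ∀ z ∈ W, (∀ j ∈ s, z j = 0) → z = 0) : finrank F W ≤ #s := by
  let restrict : W →ₗ[F] (s → F) := (LinearMap.funLeft F F ((↑) : s → ι)).comp W.subtype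
  have hinj : Function.Injective restrict := by
    rw [← LinearMap.ker_eq_bot, LinearMap.ker_eq_bot']
    intro z hz
    exact Subtype.ext (h z z.2 fun j hj => congrFun hz ⟨j, hj⟩)
  simpa using LinearMap.finrank_le_finrank_of_injective hinj

namespace IsIdentifyingVector

variable {F : Type*} [Field F] {n : ℕ} {X : Submodule F (Fin n → F)} {v : Fin n → Bool}

lemma finrank_eq (hX : IsIdentifyingVector X v) : finrank F X = #{j | v j} := by
  obtain ⟨k, M, p, hp, -, -, -, hli, rfl, hv⟩ := hX
  have : ({j | v j} : Finset (Fin n)) = univ.image p := by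
    ext j
    simp [hv]
  rw [finrank_span_eq_card hli, this, card_image_of_injective _ hp.injective]
  simp

lemma apply_eq_true_of_leading_entry (hX : IsIdentifyingVector X v) {z : Fin n → F} (hz : z ∈ X)
    {j : Fin n} (hj : z j ≠ 0) (hlt : ∀ j' < j, z j' = 0) : v j = true := by
  obtain ⟨k, M, p, hp, h1, h0, hcol, -, rfl, hv⟩ := hX
  exact (hv j).mpr (IsReducedEchelon.exists_pivot_eq_of_mem_span ⟨hp, h1, h0, hcol⟩ hz hj hlt)

lemma finrank_inf_le {Y : Submodule F (Fin n → F)} {w : Fin n → Bool}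
    (hX : IsIdentifyingVector X v) (hY : IsIdentifyingVector Y w) :
    finrank F ↥(X ⊓ Y) ≤ #{j | v j ∧ w j} := by
  refine Submodule.finrank_le_card_of_forall_apply_eq_zero _ fun z hz hzero => ?_
  by_contra hne
  obtain ⟨j, hj, hmin⟩ := wellFounded_lt.has_min {j | z j ≠ 0} (Function.ne_iff.mp hne)
  have hlt : ∀ j' < j, z j' = 0 := fun j' h => by_contra fun h' => hmin j' h' h
  exact hj (hzero j (by simp [hX.apply_eq_true_of_leading_entry hz.1 hj hlt,
    hY.apply_eq_true_of_leading_entry hz.2 hj hlt]))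

end IsIdentifyingVector

lemma hammingDist_add_two_mul_card_filter_and {ι : Type*} [Fintype ι] (u v : ι → Bool) :
    hammingDist u v + 2 * #{j | u j ∧ v j} = #{j | u j} + #{j | v j} := by
  simp only [hammingDist, card_filter, mul_sum, ← sum_add_distrib]
  refine sum_congr rfl fun j _ => ?_
  cases u j <;> cases v j <;> rfl

theorem subspaceDist_ge_hammingDist_identifying_general (F : Type*) [Field F] (n : ℕ)
    (X Y : Submodule F (Fin n → F)) (vX vY : Fin n → Bool)
    (hX : IsIdentifyingVector X vX) (hY : IsIdentifyingVector Y vY) :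
    (hammingDist vX vY : ℤ) ≤ subspaceDist X Y := by
  have hinf := hX.finrank_inf_le hY
  have hham := hammingDist_add_two_mul_card_filter_and vX vY
  rw [subspaceDist, hX.finrank_eq, hY.finrank_eq]
  omega

/-- If `X` and `Y` are subspaces of `F_q^n` with identifying vectors `v(X)` and `v(Y)`,
then `d_S(X,Y) ≥ d_H(v(X),v(Y))`. -/
theorem subspaceDist_ge_hammingDist_identifying (F : Type*) [Field F] [Fintype F] (n : ℕ)
    (X Y : Submodule F (Fin n → F)) (vX vY : Fin n → Bool)
    (hX : IsIdentifyingVector X vX) (hY : IsIdentifyingVector Y vY) :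
    (hammingDist vX vY : ℤ) ≤ subspaceDist X Y :=
  subspaceDist_ge_hammingDist_identifying_general F n X Y vX vY hX hY
end

section
/- Let F be an m × η Ferrers diagram and let C be an F_q-linear code of m × η matrices supported on F in which every nonzero codeword has rank at least δ. Fix i with 0 ≤ i ≤ δ - 1 and let ν_i be the number of dots of F not contained in the first i rows and not in the rightmost δ - 1 - i columns. Then dim C ≤ ν_i. Consequently dim C ≤ min over 0 ≤ i ≤ δ-1 of ν_i. -/
/-!
A nonzero codeword that vanishes on the dots counted by `ν_i` has all its nonzero entries in the
first `i` rows or the last `δ - 1 - i` columns, so its rank is at most `δ - 1`. Hence no nonzero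
codeword vanishes on those `ν_i` positions, and restricting codewords to them is injective.
-/

open Module

theorem Submodule.finrank_le_card_of_forall_apply_eq_zero_s6 {K M ι : Type*} [Field K]
    [AddCommGroup M] [Module K M] [Fintype ι] (C : Submodule K M) (f : ι → M →ₗ[K] K)
    (hf : ∀ x ∈ C, (∀ j, f j x = 0) → x = 0) : finrank K C ≤ Fintype.card ι := by
  have hinj : Function.Injective ((LinearMap.pi f).comp C.subtype) := by
    rw [← LinearMap.ker_eq_bot, eq_bot_iff]
    intro x hx
    exact Subtype.ext (hf x x.2 fun j => congrFun hx j)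
  simpa using LinearMap.finrank_le_finrank_of_injective hinj

namespace Matrix

variable {m n K : Type*} [Fintype n] [Field K]

theorem rank_add_le (A B : Matrix m n K) : (A + B).rank ≤ A.rank + B.rank := by
  rw [rank, rank, rank, mulVecLin_add]
  exact (Submodule.finrank_mono (LinearMap.range_add_le _ _)).trans
    (Submodule.finrank_add_le_finrank_add_finrank _ _)

theorem rank_pos_of_ne_zero {A : Matrix m n K} (hA : A ≠ 0) : 0 < A.rank := by
  classical
  rw [rank, Nat.pos_iff_ne_zero, Ne, Submodule.finrank_eq_zero, LinearMap.range_eq_bot,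
    ← toLin'_apply', LinearEquiv.map_eq_zero_iff]
  exact hA

theorem rank_le_card_add_card_of_support_subset [Fintype m] (A : Matrix m n K) (s : Finset m)
    (t : Finset n) (hA : ∀ r c, A r c ≠ 0 → r ∈ s ∨ c ∈ t) : A.rank ≤ s.card + t.card := by
  classical
  let top : Matrix m n K := of fun r c => if r ∈ s then A r c else 0
  have htop : top.rank ≤ s.card := by
    refine top.rank_le_card_of_support_subset s fun r hr => ?_
    by_contra hrs
    exact hr (funext fun c => if_neg hrs)
  have hrest : (A - top).rank ≤ t.card := by
    rw [← rank_transpose]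
    refine (A - top)ᵀ.rank_le_card_of_support_subset t fun c hc => ?_
    by_contra hct
    refine hc (funext fun r => ?_)
    by_cases hrs : r ∈ s
    · simp [top, hrs]
    · simpa [top, hrs] using (hA r c).mt (by tauto)
  calc A.rank = (top + (A - top)).rank := by rw [add_sub_cancel]
    _ ≤ top.rank + (A - top).rank := rank_add_le _ _
    _ ≤ s.card + t.card := add_le_add htop hrest

theorem rank_le_add_of_lowerLeft_eq_zero {m η : ℕ} (A : Matrix (Fin m) (Fin η) K) (i k : ℕ)
    (hA : ∀ (r : Fin m) (c : Fin η), i ≤ (r : ℕ) → (c : ℕ) < η - k → A r c = 0) :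
    A.rank ≤ i + k := by
  classical
  let rows : Finset (Fin m) := {r | (r : ℕ) < i}
  let cols : Finset (Fin η) := {c | η - k ≤ (c : ℕ)}
  have hrows : rows.card ≤ i := by
    simp only [rows, Fin.card_filter_val_lt]
    exact min_le_right _ _
  have hcols : cols.card ≤ k := by
    have hsplit : cols.card + min η (η - k) = η := by
      simpa only [not_le, Fin.card_filter_val_lt, Finset.card_univ, Fintype.card_fin] using
        Finset.card_filter_add_card_filter_not (s := Finset.univ) (fun c : Fin η => η - k ≤ (c : ℕ))
    omega
  refine (A.rank_le_card_add_card_of_support_subset rows cols fun r c hrc => ?_).trans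
    (add_le_add hrows hcols)
  by_contra! h
  simp only [rows, cols, Finset.mem_filter, Finset.mem_univ, true_and, not_lt, not_le] at h
  exact hrc (hA r c h.1 h.2)

end Matrix

theorem ferrers_rank_metric_bound_general (F : Type*) [Field F] (m η δ : ℕ)
    (D : Finset (Fin m × Fin η))
    (C : Submodule F (Matrix (Fin m) (Fin η) F))
    (hsupp : ∀ A ∈ C, ∀ r c, (r, c) ∉ D → A r c = 0)
    (hrank : ∀ A ∈ C, A ≠ 0 → δ ≤ A.rank)
    (i : ℕ) (hi : i ≤ δ - 1) :
    finrank F C ≤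
      (D.filter (fun p => i ≤ (p.1 : ℕ) ∧ (p.2 : ℕ) < η - (δ - 1 - i))).card := by
  set S := D.filter (fun p => i ≤ (p.1 : ℕ) ∧ (p.2 : ℕ) < η - (δ - 1 - i))
  refine (C.finrank_le_card_of_forall_apply_eq_zero_s6
    (fun p : S => Matrix.entryLinearMap F F p.1.1 p.1.2) fun A hA hAS => ?_).trans
    (Fintype.card_coe S).le
  by_contra hA0
  have hzero : ∀ (r : Fin m) (c : Fin η), i ≤ (r : ℕ) → (c : ℕ) < η - (δ - 1 - i) → A r c = 0 := by
    intro r c hr hc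
    by_cases hD : (r, c) ∈ D
    · exact hAS ⟨(r, c), Finset.mem_filter.2 ⟨hD, hr, hc⟩⟩
    · exact hsupp A hA r c hD
  have hle := A.rank_le_add_of_lowerLeft_eq_zero i (δ - 1 - i) hzero
  have hge := hrank A hA hA0
  have hpos := Matrix.rank_pos_of_ne_zero hA0
  omega

/-- Upper bound on the dimension of a Ferrers diagram rank-metric code.
`D` is an `m × η` Ferrers diagram (dots are right-justified in each row and the rows
have weakly decreasing length from top to bottom, i.e. `D` is closed upwards and to
the right).  If `C` is an `F_q`-linear code of `m × η` matrices supported on `D` in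
which every nonzero codeword has rank at least `δ`, then for every `0 ≤ i ≤ δ - 1`,
`dim C ≤ ν_i`, where `ν_i` is the number of dots of `D` not contained in the first `i`
rows nor in the rightmost `δ - 1 - i` columns.  (Consequently `dim C ≤ min_i ν_i`.) -/
theorem ferrers_rank_metric_bound (F : Type*) [Field F] [Fintype F] (m η δ : ℕ)
    (D : Finset (Fin m × Fin η))
    (hright : ∀ p ∈ D, ∀ c : Fin η, p.2 ≤ c → (p.1, c) ∈ D)
    (hup : ∀ p ∈ D, ∀ r : Fin m, r ≤ p.1 → (r, p.2) ∈ D)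
    (C : Submodule F (Matrix (Fin m) (Fin η) F))
    (hsupp : ∀ A ∈ C, ∀ r c, (r, c) ∉ D → A r c = 0)
    (hrank : ∀ A ∈ C, A ≠ 0 → δ ≤ A.rank)
    (i : ℕ) (hi : i ≤ δ - 1) :
    finrank F C ≤
      (D.filter (fun p => i ≤ (p.1 : ℕ) ∧ (p.2 : ℕ) < η - (δ - 1 - i))).card :=
  ferrers_rank_metric_bound_general F m η δ D C hsupp hrank i hi
end

section
/- Any maximum rank distance [m × η, m(η - δ + 1), δ] rank-metric code C' contains, as the subcode of codewords vanishing outside a Ferrers diagram F whose rightmost δ-1 columns are full (each with m dots, m ≥ η), a linear subcode of dimension at least Σ_{i=1}^{η-δ+1} γ_i, where γ_i is the number of dots in the i-th column of F. -/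
/-!
Requiring a codeword to vanish outside `D` imposes `mη - |D|` linear conditions, so the subcode
has dimension at least `m(η - δ + 1) - (mη - |D|)`. The columns after the first `η - δ + 1` are
full, so they contribute `m` each to `|D|`, and what remains of the bound is `∑_{i ≤ η - δ + 1} γ_i`.
-/

open Module Finset

namespace Submodule

variable {K V : Type*} [DivisionRing K] [AddCommGroup V] [Module K V] [FiniteDimensional K V]

theorem finrank_add_finrank_le_finrank_inf_add (s t : Submodule K V) :
    finrank K s + finrank K t ≤ finrank K ↥(s ⊓ t) + finrank K V := by
  rw [← finrank_sup_add_finrank_inf_eq, add_comm]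
  exact Nat.add_le_add_left (finrank_le _) _

end Submodule

namespace Matrix

variable {ι κ R : Type*}

def supportedOn [Semiring R] (D : Set (ι × κ)) : Submodule R (Matrix ι κ R) where
  carrier := {A | ∀ i j, (i, j) ∉ D → A i j = 0}
  add_mem' hA hB i j h := by simp [hA i j h, hB i j h]
  zero_mem' _ _ _ := rfl
  smul_mem' a A hA i j h := by simp [hA i j h]

theorem mem_supportedOn [Semiring R] {D : Set (ι × κ)} {A : Matrix ι κ R} :
    A ∈ supportedOn D ↔ ∀ i j, (i, j) ∉ D → A i j = 0 :=
  Iff.rfl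

theorem single_mem_supportedOn [Semiring R] [DecidableEq ι] [DecidableEq κ] {D : Set (ι × κ)}
    {i : ι} {j : κ} (h : (i, j) ∈ D) (a : R) : single i j a ∈ supportedOn D := by
  refine mem_supportedOn.mpr fun i' j' h' => single_apply_of_ne _ _ _ _ _ ?_
  rintro ⟨rfl, rfl⟩
  exact h' h

theorem card_le_finrank_supportedOn [DivisionRing R] [Fintype ι] [Fintype κ]
    (D : Finset (ι × κ)) : #D ≤ finrank R (supportedOn (R := R) (D : Set (ι × κ))) := by
  classical
  have hli : LinearIndependent R fun p : D => stdBasis R ι κ p :=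
    (stdBasis R ι κ).linearIndependent.comp _ Subtype.val_injective
  calc #D = finrank R (Submodule.span R (Set.range fun p : D => stdBasis R ι κ p)) := by
        rw [finrank_span_eq_card hli, Fintype.card_coe]
    _ ≤ _ := by
      refine Submodule.finrank_mono (Submodule.span_le.mpr ?_)
      rintro _ ⟨⟨⟨i, j⟩, hij⟩, rfl⟩
      change stdBasis R ι κ (i, j) ∈ _
      rw [stdBasis_eq_single]
      exact single_mem_supportedOn (Finset.mem_coe.mpr hij) 1

end Matrix

namespace Finset

variable {ι κ : Type*} [Fintype ι] [DecidableEq κ]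

theorem filter_snd_eq_of_forall_mem {D : Finset (ι × κ)} {c : κ} (hc : ∀ r, (r, c) ∈ D) :
    D.filter (·.2 = c) = univ ×ˢ {c} := by
  ext ⟨r, c'⟩
  simp only [mem_filter, mem_product, mem_univ, mem_singleton, true_and]
  exact ⟨And.right, by rintro rfl; exact ⟨hc r, rfl⟩⟩

theorem card_eq_sum_card_filter_snd_add_of_forall_mem {n : ℕ} (D : Finset (ι × Fin n)) (k : ℕ)
    (hfull : ∀ c : Fin n, k ≤ c → ∀ r, (r, c) ∈ D) :
    #D = ∑ c ∈ univ.filter (fun c : Fin n => (c : ℕ) < k), #(D.filter fun p => p.2 = c)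
      + (n - k) * Fintype.card ι := by
  rw [card_eq_sum_card_fiberwise (fun p _ => mem_univ p.2), ← sum_filter_add_sum_filter_not _
    (fun c : Fin n => (c : ℕ) < k)]
  congr 1
  calc _ = ∑ c ∈ univ.filter (fun c : Fin n => ¬ (c : ℕ) < k), Fintype.card ι := by
        refine sum_congr rfl fun c hc => ?_
        rw [filter_snd_eq_of_forall_mem (hfull c (not_lt.mp (mem_filter.mp hc).2)),
          card_product, card_univ, card_singleton, mul_one]
    _ = _ := by
      rw [sum_const, smul_eq_mul, filter_not, card_sdiff_of_subset (filter_subset _ _),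
        Fin.card_filter_val_lt, card_univ, Fintype.card_fin]
      congr 1
      omega

end Finset

theorem mrd_ferrers_subcode_dim_general (F : Type*) [Field F]
    (m η δ : ℕ)
    (C' : Submodule F (Matrix (Fin m) (Fin η) F))
    (hdim : finrank F C' = m * (η - δ + 1))
    (D : Finset (Fin m × Fin η))
    (hfull : ∀ c : Fin η, η - (δ - 1) ≤ (c : ℕ) → ∀ r : Fin m, (r, c) ∈ D) :
    ∃ Csub : Submodule F (Matrix (Fin m) (Fin η) F),
      (∀ A, A ∈ Csub ↔ (A ∈ C' ∧ ∀ r c, (r, c) ∉ D → A r c = 0)) ∧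
      (∑ c ∈ Finset.univ.filter (fun c : Fin η => (c : ℕ) < η - δ + 1),
          (D.filter (fun p => p.2 = c)).card) ≤ finrank F Csub := by
  set k := η - δ + 1
  refine ⟨C' ⊓ Matrix.supportedOn (D : Set (Fin m × Fin η)), fun A => Iff.rfl, ?_⟩
  have hinter := C'.finrank_add_finrank_le_finrank_inf_add (Matrix.supportedOn (D : Set _))
  have hsupp := Matrix.card_le_finrank_supportedOn (R := F) D
  have hD := D.card_eq_sum_card_filter_snd_add_of_forall_mem k fun c hc => hfull c (by omega)
  have hspace : finrank F (Matrix (Fin m) (Fin η) F) = m * η := by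
    rw [finrank_matrix, Fintype.card_fin, Fintype.card_fin, finrank_self, mul_one]
  have hcount : m * η ≤ m * k + (η - k) * m :=
    calc m * η ≤ m * (η - k + k) := Nat.mul_le_mul_left m le_tsub_add
      _ = m * k + (η - k) * m := by ring
  rw [Fintype.card_fin] at hD
  omega

/-- Any MRD `[m × η, m(η - δ + 1), δ]` rank-metric code `C'` contains, as the subcode
of codewords vanishing outside a Ferrers diagram `D` whose rightmost `δ - 1` columns
are full (each with `m` dots, `m ≥ η`), a linear subcode of dimension at least
`∑_{i=1}^{η-δ+1} γ_i`, where `γ_i` is the number of dots in the `i`-th column of `D`. -/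
theorem mrd_ferrers_subcode_dim (F : Type*) [Field F] [Fintype F]
    (m η δ : ℕ) (hδ : 1 ≤ δ) (hδη : δ ≤ η) (hηm : η ≤ m)
    (C' : Submodule F (Matrix (Fin m) (Fin η) F))
    (hdim : finrank F C' = m * (η - δ + 1))
    (hrank : ∀ A ∈ C', A ≠ 0 → δ ≤ A.rank)
    (D : Finset (Fin m × Fin η))
    (hright : ∀ p ∈ D, ∀ c : Fin η, p.2 ≤ c → (p.1, c) ∈ D)
    (hup : ∀ p ∈ D, ∀ r : Fin m, r ≤ p.1 → (r, p.2) ∈ D)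
    (hfull : ∀ c : Fin η, η - (δ - 1) ≤ (c : ℕ) → ∀ r : Fin m, (r, c) ∈ D) :
    ∃ Csub : Submodule F (Matrix (Fin m) (Fin η) F),
      (∀ A, A ∈ Csub ↔ (A ∈ C' ∧ ∀ r c, (r, c) ∉ D → A r c = 0)) ∧
      (∑ c ∈ Finset.univ.filter (fun c : Fin η => (c : ℕ) < η - δ + 1),
          (D.filter (fun p => p.2 = c)).card) ≤ finrank F Csub :=
  mrd_ferrers_subcode_dim_general F m η δ C' hdim D hfull
end

section
/- Let C be a linear rank-metric code of k × (n-k) matrices over F_q with q^ϱ codewords and minimum rank distance δ. Then the lifted code {rowspace([I_k | A]) : A ∈ C}, consisting of the row spaces of the matrices obtained by concatenating the k × k identity with each codeword, is a set of q^ϱ distinct k-dimensional subspaces of F_q^n with pairwise subspace distance at least 2δ. -/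
/-!
Every vector of the row space of `[I_k | A]` is `(c, c A)` for a unique `c ∈ F^k`, so
`c ↦ (c, c A)` is an isomorphism `F^k ≃ liftSpan A`. A vector lies in both `liftSpan A` and
`liftSpan B` exactly when it is `(c, c A)` with `c (A - B) = 0`; hence
`dim (liftSpan A ⊓ liftSpan B) = k - rank (A - B)` by rank–nullity, and `d_S = 2 rank (A - B)`.
The same description shows that `A ↦ liftSpan A` is injective, so the lifted code has as many
elements as `C`.
-/

open Module

/-- The row space of the `k × n` matrix `[I_k | A]` (a subspace of `F_q^n`, with
`n = k + m` coordinates indexed by `Fin k ⊕ Fin m`). -/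
noncomputable def liftSpan {F : Type*} [Field F] {k m : ℕ}
    (A : Matrix (Fin k) (Fin m) F) : Submodule F ((Fin k ⊕ Fin m) → F) :=
  Submodule.span F (Set.range fun i => Matrix.fromCols (1 : Matrix (Fin k) (Fin k) F) A i)

namespace Matrix

theorem rank_eq_finrank_range_vecMulLinear {R m n : Type*} [Field R] [Fintype m] [Fintype n]
    (A : Matrix m n R) : A.rank = finrank R (LinearMap.range A.vecMulLinear) := by
  rw [rank_eq_finrank_span_row, range_vecMulLinear]

theorem vecMul_fromCols_one {R m n : Type*} [Semiring R] [Fintype m] [DecidableEq m]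
    (A : Matrix m n R) (c : m → R) :
    c ᵥ* fromCols (1 : Matrix m m R) A = Sum.elim c (c ᵥ* A) := by
  rw [vecMul_fromCols, vecMul_one]

theorem vecMulLinear_fromCols_one_injective {R m n : Type*} [CommSemiring R] [Fintype m]
    [DecidableEq m] (A : Matrix m n R) :
    Function.Injective (fromCols (1 : Matrix m m R) A).vecMulLinear := by
  intro c d h
  simp only [vecMulLinear_apply, vecMul_fromCols_one, Sum.elim_eq_iff] at h
  exact h.1

end Matrix

open Matrix

section LiftSpan

variable {F : Type*} [Field F] {k m : ℕ}

theorem liftSpan_eq_range (A : Matrix (Fin k) (Fin m) F) :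
    liftSpan A = LinearMap.range (fromCols 1 A).vecMulLinear :=
  (range_vecMulLinear _).symm

theorem mem_liftSpan {A : Matrix (Fin k) (Fin m) F} {x : (Fin k ⊕ Fin m) → F} :
    x ∈ liftSpan A ↔ ∃ c, Sum.elim c (c ᵥ* A) = x := by
  simp only [liftSpan_eq_range, LinearMap.mem_range, vecMulLinear_apply, vecMul_fromCols_one]

theorem finrank_liftSpan (A : Matrix (Fin k) (Fin m) F) : finrank F (liftSpan A) = k := by
  rw [liftSpan_eq_range, LinearMap.finrank_range_of_inj (vecMulLinear_fromCols_one_injective A),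
    finrank_fin_fun]

theorem liftSpan_injective : Function.Injective (liftSpan : Matrix (Fin k) (Fin m) F → _) := by
  intro A B h
  refine vecMul_injective (funext fun c => ?_)
  have hc : Sum.elim c (c ᵥ* A) ∈ liftSpan B := h ▸ mem_liftSpan.2 ⟨c, rfl⟩
  obtain ⟨d, hd⟩ := mem_liftSpan.1 hc
  obtain ⟨rfl, hdB⟩ := Sum.elim_eq_iff.1 hd
  exact hdB.symm

theorem liftSpan_inf_liftSpan (A B : Matrix (Fin k) (Fin m) F) :
    liftSpan A ⊓ liftSpan B =
      (LinearMap.ker (A - B).vecMulLinear).map (fromCols 1 A).vecMulLinear := by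
  ext x
  simp only [Submodule.mem_inf, Submodule.mem_map, LinearMap.mem_ker, vecMulLinear_apply,
    vecMul_fromCols_one, vecMul_sub, sub_eq_zero, mem_liftSpan]
  constructor
  · rintro ⟨⟨d, rfl⟩, c, hc⟩
    obtain ⟨rfl, hcB⟩ := Sum.elim_eq_iff.1 hc
    exact ⟨c, hcB.symm, rfl⟩
  · rintro ⟨c, hc, rfl⟩
    exact ⟨⟨c, rfl⟩, c, by rw [hc]⟩

theorem finrank_liftSpan_inf_add_rank (A B : Matrix (Fin k) (Fin m) F) :
    finrank F ↥(liftSpan A ⊓ liftSpan B) + (A - B).rank = k := by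
  rw [liftSpan_inf_liftSpan, ← (Submodule.equivMapOfInjective _
      (vecMulLinear_fromCols_one_injective A) _).finrank_eq,
    rank_eq_finrank_range_vecMulLinear, add_comm, LinearMap.finrank_range_add_finrank_ker,
    finrank_fin_fun]

theorem subspaceDist_liftSpan (A B : Matrix (Fin k) (Fin m) F) :
    subspaceDist (liftSpan A) (liftSpan B) = 2 * (A - B).rank := by
  have h := finrank_liftSpan_inf_add_rank A B
  rw [subspaceDist, finrank_liftSpan, finrank_liftSpan]
  omega

end LiftSpan

/-- If `C` is a linear rank-metric code of `k × (n-k)` matrices over `F_q` with `q^ϱ`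
codewords (dimension `ϱ`) and minimum rank distance `δ`, then the lifted code
`{rowspace [I_k | A] : A ∈ C}` is a set of `q^ϱ` distinct `k`-dimensional subspaces of
`F_q^n` with pairwise subspace distance at least `2δ`. -/
theorem lifted_code_is_constant_dimension_code (F : Type*) [Field F] [Fintype F]
    (k m ϱ δ : ℕ) (C : Submodule F (Matrix (Fin k) (Fin m) F))
    (hdim : finrank F C = ϱ)
    (hrank : ∀ A ∈ C, ∀ B ∈ C, A ≠ B → δ ≤ (A - B).rank) :
    (∀ A ∈ C, finrank F (liftSpan A) = k) ∧
    (∀ A ∈ C, ∀ B ∈ C, A ≠ B →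
      liftSpan A ≠ liftSpan B ∧ 2 * (δ : ℤ) ≤ subspaceDist (liftSpan A) (liftSpan B)) ∧
    Nat.card {U : Submodule F ((Fin k ⊕ Fin m) → F) | ∃ A ∈ C, U = liftSpan A} =
      Fintype.card F ^ ϱ := by
  refine ⟨fun A _ => finrank_liftSpan A, fun A hA B hB hAB => ?_, ?_⟩
  · refine ⟨liftSpan_injective.ne hAB, ?_⟩
    rw [subspaceDist_liftSpan]
    exact_mod_cast Nat.mul_le_mul_left 2 (hrank A hA B hB hAB)
  · have hcode : {U | ∃ A ∈ C, U = liftSpan A} = liftSpan '' (C : Set _) := by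
      ext U
      simp only [Set.mem_ofPred_eq, Set.mem_image, SetLike.mem_coe, eq_comm]
    rw [hcode, Nat.card_image_of_injective liftSpan_injective, SetLike.coe_sort_coe,
      natCard_eq_pow_finrank (K := F), hdim, Nat.card_eq_fintype_card]
end

section
/- Let C be a set of M subspaces of F_q^n with pairwise subspace distance at least d, let Q be an (n-1)-dimensional subspace of F_q^n, and let v ∈ F_q^n with v ∉ Q. Then the set C_Q ∪ C_{Q,v}, where C_Q = { X : X ∈ C, X ⊆ Q } and C_{Q,v} = { X ∩ Q : X ∈ C, v ∈ X }, is a set of subspaces of Q with pairwise subspace distance at least d - 1. -/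
/-!
Let `Q` be a hyperplane. Intersecting a subspace that is not contained in `Q` with `Q` lowers
its dimension by exactly one. Hence, for `X, Y` in the code, cutting one of them down to `Q`
while the other already lies in `Q` lowers `d_S(X, Y)` by one, and cutting both down when
`v ∈ X ∩ Y` lowers `dim X`, `dim Y` and `dim (X ∩ Y)` by one each, leaving `d_S` unchanged.
The two kinds of codewords cannot collide, since those of `C_Q` lie in `Q` while the
codewords of `C` containing `v` do not.
-/

open Module

theorem subspaceDist_comm {K V : Type*} [Field K] [AddCommGroup V] [Module K V]
    (X Y : Submodule K V) : subspaceDist X Y = subspaceDist Y X := by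
  rw [subspaceDist, subspaceDist, inf_comm]
  ring

section Hyperplane

variable {K V : Type*} [Field K] [AddCommGroup V] [Module K V] [FiniteDimensional K V]
  {Q : Submodule K V}

theorem Submodule.finrank_inf_add_one_of_not_le (hQ : finrank K Q + 1 = finrank K V)
    {W : Submodule K V} (hW : ¬ W ≤ Q) : finrank K ↥(W ⊓ Q) + 1 = finrank K W := by
  have hlt : finrank K Q < finrank K ↥(Q ⊔ W) :=
    Submodule.finrank_lt_finrank_of_lt (left_lt_sup.mpr hW)
  have hle : finrank K ↥(Q ⊔ W) ≤ finrank K V := Submodule.finrank_le _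
  have hsum := Submodule.finrank_sup_add_finrank_inf_eq Q W
  rw [inf_comm]
  omega

theorem subspaceDist_inf_left_of_le (hQ : finrank K Q + 1 = finrank K V)
    {X Y : Submodule K V} (hX : ¬ X ≤ Q) (hY : Y ≤ Q) :
    subspaceDist (X ⊓ Q) Y = subspaceDist X Y - 1 := by
  have hX' := Submodule.finrank_inf_add_one_of_not_le hQ hX
  have hcap : X ⊓ Q ⊓ Y = X ⊓ Y := by rw [inf_right_comm, inf_assoc, inf_eq_left.mpr hY]
  rw [subspaceDist, subspaceDist, hcap]
  omega

theorem subspaceDist_inf_inf (hQ : finrank K Q + 1 = finrank K V)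
    {X Y : Submodule K V} (hXY : ¬ X ⊓ Y ≤ Q) :
    subspaceDist (X ⊓ Q) (Y ⊓ Q) = subspaceDist X Y := by
  have hX := Submodule.finrank_inf_add_one_of_not_le hQ fun h => hXY (inf_le_left.trans h)
  have hY := Submodule.finrank_inf_add_one_of_not_le hQ fun h => hXY (inf_le_right.trans h)
  have hXY' := Submodule.finrank_inf_add_one_of_not_le hQ hXY
  rw [subspaceDist, subspaceDist, ← inf_inf_distrib_right]
  omega

end Hyperplane

theorem punctured_code_distance_general (F : Type*) [Field F] (n d : ℕ)
    (C : Set (Submodule F (Fin n → F)))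
    (hd : ∀ X ∈ C, ∀ Y ∈ C, X ≠ Y → (d : ℤ) ≤ subspaceDist X Y)
    (Q : Submodule F (Fin n → F)) (hQ : finrank F Q = n - 1)
    (v : Fin n → F) (hv : v ∉ Q) :
    (∀ Z ∈ ({X | X ∈ C ∧ X ≤ Q} ∪ {Z | ∃ X ∈ C, v ∈ X ∧ Z = X ⊓ Q} :
        Set (Submodule F (Fin n → F))), Z ≤ Q) ∧
    (∀ Z₁ ∈ ({X | X ∈ C ∧ X ≤ Q} ∪ {Z | ∃ X ∈ C, v ∈ X ∧ Z = X ⊓ Q} :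
        Set (Submodule F (Fin n → F))),
      ∀ Z₂ ∈ ({X | X ∈ C ∧ X ≤ Q} ∪ {Z | ∃ X ∈ C, v ∈ X ∧ Z = X ⊓ Q} :
        Set (Submodule F (Fin n → F))),
      Z₁ ≠ Z₂ → (d : ℤ) - 1 ≤ subspaceDist Z₁ Z₂) := by
  have hQV : finrank F Q + 1 = finrank F (Fin n → F) := by
    have := Submodule.finrank_lt (fun h => hv (h ▸ Submodule.mem_top) : Q ≠ ⊤)
    rw [finrank_fin_fun] at this ⊢
    omega
  have not_le_of_mem {X : Submodule F (Fin n → F)} (hvX : v ∈ X) : ¬ X ≤ Q := fun h => hv (h hvX)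
  refine ⟨?_, ?_⟩
  · rintro Z (⟨-, hZQ⟩ | ⟨X, -, -, rfl⟩)
    exacts [hZQ, inf_le_right]
  rintro Z₁ (⟨hX, hXQ⟩ | ⟨X, hX, hvX, rfl⟩) Z₂ (⟨hY, hYQ⟩ | ⟨Y, hY, hvY, rfl⟩) hne
  · linarith [hd Z₁ hX Z₂ hY hne]
  · have hXY : Y ≠ Z₁ := fun h => not_le_of_mem hvY (h ▸ hXQ)
    rw [subspaceDist_comm, subspaceDist_inf_left_of_le hQV (not_le_of_mem hvY) hXQ]
    linarith [hd Y hY Z₁ hX hXY]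
  · have hXY : X ≠ Z₂ := fun h => not_le_of_mem hvX (h ▸ hYQ)
    rw [subspaceDist_inf_left_of_le hQV (not_le_of_mem hvX) hYQ]
    linarith [hd X hX Z₂ hY hXY]
  · have hXY : X ≠ Y := fun h => hne (h ▸ rfl)
    rw [subspaceDist_inf_inf hQV (not_le_of_mem ⟨hvX, hvY⟩)]
    linarith [hd X hX Y hY hXY]

/-- Punctured codes.  Let `C` be a set of subspaces of `F_q^n` with pairwise subspace
distance at least `d`, let `Q` be an `(n-1)`-dimensional subspace of `F_q^n` and let
`v ∈ F_q^n` with `v ∉ Q`.  Then the punctured code `C_Q ∪ C_{Q,v}`, where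
`C_Q = {X : X ∈ C, X ⊆ Q}` and `C_{Q,v} = {X ∩ Q : X ∈ C, v ∈ X}`, is a set of
subspaces of `Q` with pairwise subspace distance at least `d - 1`. -/
theorem punctured_code_distance (F : Type*) [Field F] [Fintype F] (n d : ℕ)
    (C : Set (Submodule F (Fin n → F)))
    (hd : ∀ X ∈ C, ∀ Y ∈ C, X ≠ Y → (d : ℤ) ≤ subspaceDist X Y)
    (Q : Submodule F (Fin n → F)) (hQ : finrank F Q = n - 1)
    (v : Fin n → F) (hv : v ∉ Q) :
    (∀ Z ∈ ({X | X ∈ C ∧ X ≤ Q} ∪ {Z | ∃ X ∈ C, v ∈ X ∧ Z = X ⊓ Q} :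
        Set (Submodule F (Fin n → F))), Z ≤ Q) ∧
    (∀ Z₁ ∈ ({X | X ∈ C ∧ X ≤ Q} ∪ {Z | ∃ X ∈ C, v ∈ X ∧ Z = X ⊓ Q} :
        Set (Submodule F (Fin n → F))),
      ∀ Z₂ ∈ ({X | X ∈ C ∧ X ≤ Q} ∪ {Z | ∃ X ∈ C, v ∈ X ∧ Z = X ⊓ Q} :
        Set (Submodule F (Fin n → F))),
      Z₁ ≠ Z₂ → (d : ℤ) - 1 ≤ subspaceDist Z₁ Z₂) :=
  punctured_code_distance_general F n d C hd Q hQ v hv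
end

section
/- If C is a set of M k-dimensional subspaces of F_q^n with pairwise subspace distance at least d (where 0 < k < n), then there exist an (n-1)-dimensional subspace Q of F_q^n and a vector v ∉ Q such that |{X ∈ C : X ⊆ Q}| + |{X ∈ C : v ∈ X}| ≥ M(q^{n-k} + q^k - 2)/(q^n - 1). -/
open Module

/-!
Hyperplanes are parametrised by the `q ^ n - 1` nonzero functionals `φ`, each hyperplane `ker φ`
being counted `q - 1` times, which does not affect averages. A `k`-dimensional subspace lies in
`ker φ` for exactly `q ^ (n - k) - 1` of them, so some hyperplane `Q` contains at least
`M (q ^ (n - k) - 1) / (q ^ n - 1)` members of `C`. Each of the remaining members meets the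
complement of `Q` in `q ^ k - q ^ (k - 1)` of its vectors, out of `q ^ n - q ^ (n - 1)`, so some
`v ∉ Q` lies in at least a fraction `q ^ (k - n)` of them. Adding the two bounds gives the claim.
-/

open Finset LinearMap

theorem Finset.exists_sum_le_card_mul {ι : Type*} {s : Finset ι} (hs : s.Nonempty)
    (f : ι → ℕ) :
    ∃ i ∈ s, ∑ j ∈ s, f j ≤ #s * f i := by
  obtain ⟨i, hi, hmax⟩ := s.exists_max_image f hs
  exact ⟨i, hi, by simpa using s.sum_le_card_nsmul f (f i) hmax⟩

section

open scoped Classical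

variable {F V : Type*} [Field F] [AddCommGroup V] [Module F V]

theorem finrank_inf_ker_add_one [FiniteDimensional F V] {φ : Dual F V} {X : Submodule F V}
    (hX : ¬X ≤ ker φ) : finrank F ↥(X ⊓ ker φ) + 1 = finrank F X := by
  have hφ : φ ≠ 0 := by
    rintro rfl
    simp at hX
  have hsup : X ⊔ ker φ = ⊤ :=
    (isCoatom_ker_of_surjective (surjective_of_ne_zero hφ)).lt_iff.mp
      (lt_of_le_not_ge le_sup_right fun h => hX (le_sup_left.trans h))
  have := Submodule.finrank_sup_add_finrank_inf_eq X (ker φ)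
  have := Dual.finrank_ker_add_one_of_ne_zero hφ
  rw [hsup, finrank_top] at *
  omega

variable [Fintype F]

theorem Submodule.card_filter_mem [Fintype V] (W : Submodule F V) :
    #({v | v ∈ W} : Finset V) = Fintype.card F ^ finrank F W := by
  rw [← card_eq_pow_finrank (V := W), Fintype.card_subtype]

theorem Submodule.card_filter_ne_zero_mem [Fintype V] (W : Submodule F V) :
    #({v | v ≠ 0 ∧ v ∈ W} : Finset V) = Fintype.card F ^ finrank F W - 1 := by
  have : univ.filter (fun v => v ≠ 0 ∧ v ∈ W) = (univ.filter (· ∈ W)).erase 0 := by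
    ext v
    simp
  rw [this, card_erase_of_mem (by simp), W.card_filter_mem]

variable [FiniteDimensional F V]

theorem card_filter_ne_zero_le_ker [Fintype (Dual F V)] (X : Submodule F V) :
    #{φ : Dual F V | φ ≠ 0 ∧ X ≤ ker φ} =
      Fintype.card F ^ (finrank F V - finrank F X) - 1 := by
  have hmem : ∀ φ : Dual F V, X ≤ ker φ ↔ φ ∈ X.dualAnnihilator := fun φ => by
    simp [SetLike.le_def, Submodule.mem_dualAnnihilator]
  have hrank := Subspace.finrank_add_finrank_dualAnnihilator_eq X
  simp_rw [hmem, X.dualAnnihilator.card_filter_ne_zero_mem]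
  congr 2
  omega

theorem card_filter_mem_apply_ne_zero_mul [Fintype V] {φ : Dual F V} {X : Submodule F V}
    (hX : ¬X ≤ ker φ) :
    #{v | φ v ≠ 0 ∧ v ∈ X} * Fintype.card F =
      (Fintype.card F - 1) * Fintype.card F ^ finrank F X := by
  have hdiff : univ.filter (fun v => φ v ≠ 0 ∧ v ∈ X) =
      univ.filter (· ∈ X) \ univ.filter (· ∈ X ⊓ ker φ) := by
    ext v
    simp only [mem_filter, mem_sdiff, mem_univ, true_and, Submodule.mem_inf, mem_ker]
    tauto
  rw [hdiff, card_sdiff_of_subset fun v hv => by simp_all [Submodule.mem_inf],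
    Submodule.card_filter_mem, Submodule.card_filter_mem, ← finrank_inf_ker_add_one hX, pow_succ,
    ← Nat.mul_sub_one]
  ring

theorem exists_ne_zero_card_mul_le_card_filter_le_ker (S : Finset (Submodule F V)) {k : ℕ}
    (hS : ∀ X ∈ S, finrank F X = k) (hV : 0 < finrank F V) :
    ∃ φ : Dual F V, φ ≠ 0 ∧
      #S * (Fintype.card F ^ (finrank F V - k) - 1) ≤
        (Fintype.card F ^ finrank F V - 1) * #{X ∈ S | X ≤ ker φ} := by
  have := Module.finite_of_finite F (M := Dual F V)
  let := Fintype.ofFinite (Dual F V)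
  set T : Finset (Dual F V) := {φ | φ ≠ 0}
  have hT : #T = Fintype.card F ^ finrank F V - 1 := by
    simpa [Subspace.dual_finrank_eq] using (⊤ : Submodule F (Dual F V)).card_filter_ne_zero_mem
  have hTne : T.Nonempty := by
    rw [← card_pos, hT]
    exact Nat.sub_pos_of_lt (Nat.one_lt_pow hV.ne' Fintype.one_lt_card)
  obtain ⟨φ, hφT, hφ⟩ := exists_sum_le_card_mul hTne fun φ => #{X ∈ S | X ≤ ker φ}
  refine ⟨φ, (mem_filter.mp hφT).2, ?_⟩
  calc #S * (Fintype.card F ^ (finrank F V - k) - 1)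
      = ∑ X ∈ S, #{φ ∈ T | X ≤ ker φ} := by
        refine (sum_const_nat fun X hX => ?_).symm
        rw [filter_filter, card_filter_ne_zero_le_ker, hS X hX]
    _ = ∑ φ ∈ T, #{X ∈ S | X ≤ ker φ} :=
        sum_card_bipartiteAbove_eq_sum_card_bipartiteBelow _
    _ ≤ _ := by rwa [hT] at hφ

theorem exists_apply_ne_zero_card_filter_not_le_ker_le (S : Finset (Submodule F V)) {k : ℕ}
    (hS : ∀ X ∈ S, finrank F X = k) (hk : k ≤ finrank F V) {φ : Dual F V} (hφ : φ ≠ 0) :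
    ∃ v, φ v ≠ 0 ∧
      #{X ∈ S | ¬X ≤ ker φ} ≤
        Fintype.card F ^ (finrank F V - k) * #{X ∈ S | v ∈ X} := by
  have := Module.finite_of_finite F (M := V)
  let := Fintype.ofFinite V
  set q := Fintype.card F
  have hq : 1 < q := Fintype.one_lt_card
  set T : Finset V := {v | φ v ≠ 0}
  have hT : #T * q = (q - 1) * q ^ finrank F V := by
    have hTtop : ({v | φ v ≠ 0 ∧ v ∈ (⊤ : Submodule F V)} : Finset V) = T := by
      ext v
      simp [T]
    rw [← hTtop, card_filter_mem_apply_ne_zero_mul (by rwa [top_le_iff, ker_eq_top]), finrank_top]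
  have hTne : T.Nonempty := by
    obtain ⟨v, hv⟩ := DFunLike.ne_iff.mp hφ
    exact ⟨v, by simpa [T] using hv⟩
  obtain ⟨v, hvT, hv⟩ := exists_sum_le_card_mul hTne fun v => #{X ∈ S | v ∈ X}
  refine ⟨v, (mem_filter.mp hvT).2, Nat.le_of_mul_le_mul_right ?_
    (Nat.mul_pos (Nat.sub_pos_of_lt hq) (pow_pos (by omega : 0 < q) k))⟩
  calc #{X ∈ S | ¬X ≤ ker φ} * ((q - 1) * q ^ k)
      = ∑ X ∈ S with ¬X ≤ ker φ, #{w ∈ T | w ∈ X} * q := by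
        refine (sum_const_nat fun X hX => ?_).symm
        rw [mem_filter] at hX
        rw [filter_filter, card_filter_mem_apply_ne_zero_mul hX.2, hS X hX.1]
    _ ≤ (∑ X ∈ S, #{w ∈ T | w ∈ X}) * q := by
        rw [sum_mul]
        exact sum_le_sum_of_subset (filter_subset _ _)
    _ = (∑ w ∈ T, #{X ∈ S | w ∈ X}) * q := by
        congr 1
        exact sum_card_bipartiteAbove_eq_sum_card_bipartiteBelow _
    _ ≤ #T * #{X ∈ S | v ∈ X} * q := by gcongr
    _ = q ^ (finrank F V - k) * #{X ∈ S | v ∈ X} * ((q - 1) * q ^ k) := by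
        rw [mul_right_comm, hT, ← pow_sub_mul_pow q hk]
        ring

end

theorem Nat.mul_add_sub_two_le_of_averages {b c M A B : ℕ} (hb : 1 ≤ b) (hc : 1 ≤ c)
    (hAM : A ≤ M) (hA : M * (b - 1) ≤ (b * c - 1) * A) (hB : M - A ≤ b * B) :
    M * (b + c - 2) ≤ (A + B) * (b * c - 1) := by
  have hbc : 1 ≤ b * c := Nat.mul_le_mul hb hc
  zify [hb, hbc, hAM, (by omega : 2 ≤ b + c)] at hA hB ⊢
  -- `b (A + B) (bc - 1) ≥ A (b - 1) (bc - 1) + M (bc - 1) ≥ M (b - 1) ^ 2 + M (bc - 1)`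
  refine le_of_mul_le_mul_left ?_ (by positivity : (0 : ℤ) < b)
  nlinarith [mul_le_mul_of_nonneg_right hA (by linarith : (0 : ℤ) ≤ b - 1),
    mul_le_mul_of_nonneg_right hB (by nlinarith : (0 : ℤ) ≤ b * c - 1)]

theorem punctured_code_size_general (F : Type*) [Field F] [Fintype F] (n k M : ℕ)
    (hkn : k < n)
    (C : Set (Submodule F (Fin n → F))) (hM : Nat.card C = M)
    (hdim : ∀ X ∈ C, finrank F X = k) :
    ∃ (Q : Submodule F (Fin n → F)) (v : Fin n → F),
      finrank F Q = n - 1 ∧ v ∉ Q ∧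
      M * (Fintype.card F ^ (n - k) + Fintype.card F ^ k - 2) ≤
        (Nat.card {X | X ∈ C ∧ X ≤ Q} + Nat.card {X | X ∈ C ∧ v ∈ X}) *
          (Fintype.card F ^ n - 1) := by
  classical
  set S := C.toFinite.toFinset
  have hS : ∀ X ∈ S, finrank F X = k := fun X hX => hdim X (C.toFinite.mem_toFinset.mp hX)
  have hV : finrank F (Fin n → F) = n := finrank_fin_fun F
  obtain ⟨φ, hφ, hA⟩ := exists_ne_zero_card_mul_le_card_filter_le_ker S hS (by omega)
  obtain ⟨v, hv, hB⟩ := exists_apply_ne_zero_card_filter_not_le_ker_le S hS (by omega) hφ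
  refine ⟨ker φ, v, by have := Dual.finrank_ker_add_one_of_ne_zero hφ; omega, hv, ?_⟩
  have hcard (p : Submodule F (Fin n → F) → Prop) :
      Nat.card {X | X ∈ C ∧ p X} = #{X ∈ S | p X} := by
    rw [← Set.ncard_coe_finset, ← Nat.card_coe_set_eq]
    congr! 3
    ext X
    simp [S]
  have hC : Nat.card C = #S := Set.ncard_eq_toFinset_card C C.toFinite
  have hsplit := card_filter_add_card_filter_not (s := S) (· ≤ ker φ)
  rw [hV, ← pow_sub_mul_pow _ hkn.le] at hA
  rw [hV] at hB
  rw [hcard, hcard, ← hM, hC, ← pow_sub_mul_pow _ hkn.le]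
  exact Nat.mul_add_sub_two_le_of_averages (Nat.one_le_pow _ _ Fintype.card_pos)
    (Nat.one_le_pow _ _ Fintype.card_pos) (card_filter_le _ _) hA (by omega)

/-- If `C` is a set of `M` `k`-dimensional subspaces of `F_q^n` with pairwise subspace
distance at least `d` (with `0 < k < n`), then there exist an `(n-1)`-dimensional
subspace `Q` of `F_q^n` and a vector `v ∉ Q` such that
`|{X ∈ C : X ⊆ Q}| + |{X ∈ C : v ∈ X}| ≥ M (q^{n-k} + q^k - 2) / (q^n - 1)`
(stated multiplicatively to avoid division). -/
theorem punctured_code_size (F : Type*) [Field F] [Fintype F] (n k d M : ℕ)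
    (hk0 : 0 < k) (hkn : k < n)
    (C : Set (Submodule F (Fin n → F))) (hfin : C.Finite) (hM : Nat.card C = M)
    (hdim : ∀ X ∈ C, finrank F X = k)
    (hd : ∀ X ∈ C, ∀ Y ∈ C, X ≠ Y → (d : ℤ) ≤ subspaceDist X Y) :
    ∃ (Q : Submodule F (Fin n → F)) (v : Fin n → F),
      finrank F Q = n - 1 ∧ v ∉ Q ∧
      M * (Fintype.card F ^ (n - k) + Fintype.card F ^ k - 2) ≤
        (Nat.card {X | X ∈ C ∧ X ≤ Q} + Nat.card {X | X ∈ C ∧ v ∈ X}) *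
          (Fintype.card F ^ n - 1) :=
  punctured_code_size_general F n k M hkn C hM hdim
end

section
/- Let F be an m × η Ferrers diagram and δ ≥ 1. The minimum number of dots whose removal from F leaves at most δ - 1 rows of dots or at most δ - 1 columns of dots is an upper bound on the dimension of any F_q-linear Ferrers diagram rank-metric code supported on F with minimum rank distance δ. -/
/-!
A codeword vanishing on the removed dots `R` is supported on `D \ R`, hence has at most `δ - 1`
nonzero rows or at most `δ - 1` nonzero columns. Its rank is then below `δ`, so it is zero.
Thus reading off the entries in `R` is injective on the code, and the dimension is at most `|R|`.
-/

open Module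

namespace Matrix

variable {F : Type*} [Field F] {m n : Type*} [Fintype n]

theorem rank_eq_zero_iff {A : Matrix m n F} : A.rank = 0 ↔ A = 0 := by
  classical
  rw [rank, Submodule.finrank_eq_zero, LinearMap.range_eq_bot, ← toLin'_apply',
    LinearEquiv.map_eq_zero_iff]

variable [Fintype m]

theorem rank_le_card_of_forall_notMem_row_eq_zero (A : Matrix m n F) (S : Finset m)
    (h : ∀ i ∉ S, ∀ j, A i j = 0) : A.rank ≤ S.card := by
  classical
  set P : Matrix m m F := diagonal fun i => if i ∈ S then 1 else 0
  have hPA : P * A = A := by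
    ext i j
    by_cases hi : i ∈ S <;> simp [P, hi, h]
  calc A.rank = (P * A).rank := by rw [hPA]
    _ ≤ P.rank := rank_mul_le_left _ _
    _ = S.card := by rw [rank_diagonal]; simp [Fintype.card_subtype]

theorem rank_le_card_of_forall_notMem_col_eq_zero (A : Matrix m n F) (S : Finset n)
    (h : ∀ j ∉ S, ∀ i, A i j = 0) : A.rank ≤ S.card :=
  rank_transpose A ▸ Aᵀ.rank_le_card_of_forall_notMem_row_eq_zero S h

theorem rank_le_card_image_fst_of_support [DecidableEq m] (A : Matrix m n F)
    (T : Finset (m × n)) (h : ∀ i j, (i, j) ∉ T → A i j = 0) :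
    A.rank ≤ (T.image Prod.fst).card :=
  A.rank_le_card_of_forall_notMem_row_eq_zero _ fun i hi j =>
    h i j fun hij => hi (Finset.mem_image_of_mem Prod.fst hij)

theorem rank_le_card_image_snd_of_support [DecidableEq n] (A : Matrix m n F)
    (T : Finset (m × n)) (h : ∀ i j, (i, j) ∉ T → A i j = 0) :
    A.rank ≤ (T.image Prod.snd).card :=
  A.rank_le_card_of_forall_notMem_col_eq_zero _ fun j hj i =>
    h i j fun hij => hj (Finset.mem_image_of_mem Prod.snd hij)

theorem finrank_le_card_of_vanishing_on_eq_zero {C : Submodule F (Matrix m n F)}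
    (R : Finset (m × n)) (h : ∀ A ∈ C, (∀ p ∈ R, A p.1 p.2 = 0) → A = 0) :
    finrank F C ≤ R.card := by
  let restrict : C →ₗ[F] (R → F) :=
    { toFun := fun A p => A.1 p.1.1 p.1.2
      map_add' := fun _ _ => rfl
      map_smul' := fun _ _ => rfl }
  have hinj : Function.Injective restrict := by
    rw [← LinearMap.ker_eq_bot, LinearMap.ker_eq_bot']
    rintro ⟨A, hA⟩ hzero
    exact Subtype.ext <| h A hA fun p hp => congrFun hzero ⟨p, hp⟩
  simpa using LinearMap.finrank_le_finrank_of_injective hinj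

end Matrix

theorem ferrers_removal_bound_general (F : Type*) [Field F] (m η δ : ℕ)
    (D : Finset (Fin m × Fin η))
    (C : Submodule F (Matrix (Fin m) (Fin η) F))
    (hsupp : ∀ A ∈ C, ∀ r c, (r, c) ∉ D → A r c = 0)
    (hrank : ∀ A ∈ C, A ≠ 0 → δ ≤ A.rank)
    (R : Finset (Fin m × Fin η))
    (hrem : ((D \ R).image Prod.fst).card ≤ δ - 1 ∨
            ((D \ R).image Prod.snd).card ≤ δ - 1) :
    finrank F C ≤ R.card := by
  refine Matrix.finrank_le_card_of_vanishing_on_eq_zero R fun A hA hR => ?_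
  by_contra hA0
  have hsuppDR : ∀ r c, (r, c) ∉ D \ R → A r c = 0 := fun r c hrc => by
    rw [Finset.mem_sdiff, not_and_not_right] at hrc
    by_cases hD : (r, c) ∈ D
    · exact hR (r, c) (hrc hD)
    · exact hsupp A hA r c hD
  have hpos : 0 < A.rank := Nat.pos_of_ne_zero (mt Matrix.rank_eq_zero_iff.mp hA0)
  have hδ := hrank A hA hA0
  rcases hrem with hrows | hcols
  · have := A.rank_le_card_image_fst_of_support _ hsuppDR
    omega
  · have := A.rank_le_card_image_snd_of_support _ hsuppDR
    omega

/-- Corollary of the Ferrers diagram bound: if removing a set `R` of dots from the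
Ferrers diagram `D` leaves at most `δ - 1` rows of dots or at most `δ - 1` columns of
dots, then `|R|` is an upper bound on the dimension of any `F_q`-linear Ferrers diagram
rank-metric code supported on `D` with minimum rank distance `δ`.  In particular the
minimum number of such dots is an upper bound. -/
theorem ferrers_removal_bound (F : Type*) [Field F] [Fintype F] (m η δ : ℕ)
    (D : Finset (Fin m × Fin η))
    (hright : ∀ p ∈ D, ∀ c : Fin η, p.2 ≤ c → (p.1, c) ∈ D)
    (hup : ∀ p ∈ D, ∀ r : Fin m, r ≤ p.1 → (r, p.2) ∈ D)
    (C : Submodule F (Matrix (Fin m) (Fin η) F))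
    (hsupp : ∀ A ∈ C, ∀ r c, (r, c) ∉ D → A r c = 0)
    (hrank : ∀ A ∈ C, A ≠ 0 → δ ≤ A.rank)
    (R : Finset (Fin m × Fin η)) (hR : R ⊆ D)
    (hrem : ((D \ R).image Prod.fst).card ≤ δ - 1 ∨
            ((D \ R).image Prod.snd).card ≤ δ - 1) :
    finrank F C ≤ R.card :=
  ferrers_removal_bound_general F m η δ D C hsupp hrank R hrem
end

section
/- Let C be a set of k-dimensional subspaces of F_q^n with minimum subspace distance 2δ, let Q be a hyperplane of F_q^n, v ∉ Q, and let C' = C_Q ∪ C_{Q,v} be the corresponding punctured code inside Q. Suppose X ∈ C gives rise to the codeword X' ∈ C' (either X' = X ⊆ Q or X' = X ∩ Q with v ∈ X). If Y' is a subspace of Q with d_S(X', Y') ≤ δ - 1, then X is the unique codeword of C satisfying d_S(X, Z) ≤ δ - 1, where Z = Y' if dim Y' has the appropriate parity (matching the case analysis on δ and k mod 2) and Z = Y' ∪ (v + Y') (the subspace spanned by Y' and v) otherwise. -/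
/-!
Write `L = span {v}` and `d' = d_S(X', Y')`. Both candidates `Y'` and `Y' ⊔ L` lie within
`d' + 1 ≤ δ` of `X`: if `X' = X` this is the triangle inequality with `d_S(Y', Y' ⊔ L) ≤ 1`; if
`X' = X ⊓ Q` then `X = X' ⊔ L` because `Q` is a hyperplane, and `· ⊔ L` is `d_S`-contracting.
Since `d_S(X, Z) ≡ dim X + dim Z (mod 2)`, the parity rule picks the candidate with
`d_S(X, Z) ≢ δ`, whence `d_S(X, Z) ≤ δ - 1`. Uniqueness is the triangle inequality against the
minimum distance `2δ`.
-/

open Module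

open Submodule

section SubspaceDist

variable {F M : Type*} [Field F] [AddCommGroup M] [Module F M]

lemma subspaceDist_comm_s19 (U V : Submodule F M) : subspaceDist U V = subspaceDist V U := by
  rw [subspaceDist, subspaceDist, inf_comm]
  ring

lemma subspaceDist_modEq_two (U V : Submodule F M) :
    subspaceDist U V ≡ finrank F U + finrank F V [ZMOD 2] := by
  rw [subspaceDist, Int.ModEq]
  omega

lemma subspaceDist_of_le {U V : Submodule F M} (h : U ≤ V) :
    subspaceDist U V = finrank F V - finrank F U := by
  rw [subspaceDist, inf_eq_left.mpr h]
  ring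

variable [FiniteDimensional F M]

lemma subspaceDist_eq_two_mul_finrank_sup (U V : Submodule F M) :
    subspaceDist U V = 2 * finrank F ↥(U ⊔ V) - finrank F U - finrank F V := by
  have := finrank_sup_add_finrank_inf_eq U V
  rw [subspaceDist]
  omega

lemma subspaceDist_triangle (U V W : Submodule F M) :
    subspaceDist U W ≤ subspaceDist U V + subspaceDist V W := by
  have hsup := finrank_sup_add_finrank_inf_eq (U ⊓ V) (V ⊓ W)
  have hle_V : finrank F ↥(U ⊓ V ⊔ V ⊓ W) ≤ finrank F V :=
    finrank_mono (sup_le inf_le_right inf_le_left)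
  have hle_UW : finrank F ↥(U ⊓ V ⊓ (V ⊓ W)) ≤ finrank F ↥(U ⊓ W) :=
    finrank_mono (le_inf (inf_le_left.trans inf_le_left) (inf_le_right.trans inf_le_right))
  simp only [subspaceDist]
  omega

lemma subspaceDist_sup_span_singleton_le_one (Y : Submodule F M) (v : M) :
    subspaceDist Y (Y ⊔ span F {v}) ≤ 1 := by
  rw [subspaceDist_of_le le_sup_left]
  by_cases hv : v ∈ Y
  · rw [sup_eq_left.mpr ((span_singleton_le_iff_mem v Y).mpr hv)]
    simp
  · rw [finrank_sup_span_singleton hv]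
    omega

lemma finrank_sup_add_finrank_le {S T : Submodule F M} (hTS : T ≤ S) (W : Submodule F M) :
    finrank F ↥(S ⊔ W) + finrank F T ≤ finrank F ↥(T ⊔ W) + finrank F S := by
  have hS := finrank_sup_add_finrank_inf_eq S W
  have hT := finrank_sup_add_finrank_inf_eq T W
  have hinf : finrank F ↥(T ⊓ W) ≤ finrank F ↥(S ⊓ W) := finrank_mono (inf_le_inf_right W hTS)
  omega

lemma subspaceDist_sup_sup_le (U V W : Submodule F M) :
    subspaceDist (U ⊔ W) (V ⊔ W) ≤ subspaceDist U V := by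
  have hU := finrank_sup_add_finrank_le (le_sup_left : U ≤ U ⊔ V) W
  have hV := finrank_sup_add_finrank_le (le_sup_right : V ≤ U ⊔ V) W
  have hsup : U ⊔ W ⊔ (V ⊔ W) = U ⊔ V ⊔ W := by
    rw [sup_sup_sup_comm, sup_idem]
  rw [subspaceDist_eq_two_mul_finrank_sup, subspaceDist_eq_two_mul_finrank_sup, hsup]
  omega

lemma sup_span_singleton_eq_top {Q : Submodule F M} (hQ : finrank F Q = finrank F M - 1)
    {v : M} (hv : v ∉ Q) : Q ⊔ span F {v} = ⊤ := by
  apply eq_top_of_finrank_eq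
  have := finrank_le (Q ⊔ span F {v})
  rw [finrank_sup_span_singleton hv] at this ⊢
  omega

lemma subspaceDist_le_of_mem_of_sup_eq_top {X Q : Submodule F M} {v : M} (hvX : v ∈ X)
    (hQv : Q ⊔ span F {v} = ⊤) (Y : Submodule F M) :
    subspaceDist X Y ≤ subspaceDist (X ⊓ Q) Y + 1 ∧
      subspaceDist X (Y ⊔ span F {v}) ≤ subspaceDist (X ⊓ Q) Y := by
  have hX : X ⊓ Q ⊔ span F {v} = X := by
    rw [inf_sup_assoc_of_le Q ((span_singleton_le_iff_mem v X).mpr hvX), hQv, inf_top_eq]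
  constructor
  · have := subspaceDist_sup_span_singleton_le_one (X ⊓ Q) v
    rw [subspaceDist_comm_s19, hX] at this
    linarith [subspaceDist_triangle X (X ⊓ Q) Y]
  · simpa only [hX] using subspaceDist_sup_sup_le (X ⊓ Q) Y (span F {v})

end SubspaceDist

theorem punctured_decoding_correct_general (F : Type*) [Field F] (n k δ : ℕ)
    (C : Set (Submodule F (Fin n → F)))
    (hdim : ∀ X ∈ C, finrank F X = k)
    (hd : ∀ X ∈ C, ∀ Y ∈ C, X ≠ Y → 2 * (δ : ℤ) ≤ subspaceDist X Y)
    (Q : Submodule F (Fin n → F)) (hQ : finrank F Q = n - 1)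
    (v : Fin n → F) (hv : v ∉ Q)
    (X : Submodule F (Fin n → F)) (hX : X ∈ C)
    (X' : Submodule F (Fin n → F))
    (hX' : (X ≤ Q ∧ X' = X) ∨ (v ∈ X ∧ X' = X ⊓ Q))
    (Y' : Submodule F (Fin n → F)) (hY' : Y' ≤ Q)
    (hclose : subspaceDist X' Y' ≤ (δ : ℤ) - 1)
    (Z : Submodule F (Fin n → F))
    (hZ : Z = if (Even δ ↔ finrank F Y' % 2 = k % 2)
              then Y' ⊔ Submodule.span F {v} else Y') :
    subspaceDist X Z ≤ (δ : ℤ) - 1 ∧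
    ∀ W ∈ C, subspaceDist W Z ≤ (δ : ℤ) - 1 → W = X := by
  have hnear : subspaceDist X Y' ≤ δ ∧ subspaceDist X (Y' ⊔ span F {v}) ≤ δ := by
    rcases hX' with ⟨-, rfl⟩ | ⟨hvX, rfl⟩
    · have := subspaceDist_triangle X' Y' (Y' ⊔ span F {v})
      have := subspaceDist_sup_span_singleton_le_one Y' v
      constructor <;> linarith
    · have hQv := sup_span_singleton_eq_top (by rwa [finrank_fin_fun]) hv
      obtain ⟨hY, hYv⟩ := subspaceDist_le_of_mem_of_sup_eq_top hvX hQv Y'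
      constructor <;> linarith
  have hdecode : subspaceDist X Z ≤ (δ : ℤ) - 1 := by
    have hparity := subspaceDist_modEq_two X Z
    rw [hdim X hX, Int.ModEq] at hparity
    by_cases hrule : Even δ ↔ finrank F Y' % 2 = k % 2
    · rw [if_pos hrule] at hZ
      subst hZ
      rw [finrank_sup_span_singleton fun h => hv (hY' h)] at hparity
      rw [Nat.even_iff] at hrule
      omega
    · rw [if_neg hrule] at hZ
      subst hZ
      rw [Nat.even_iff] at hrule
      omega
  refine ⟨hdecode, fun W hW hWZ => by_contra fun hWX => ?_⟩
  have := subspaceDist_triangle W Z X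
  rw [subspaceDist_comm_s19 Z X] at this
  linarith [hd W hW X hX hWX]

/-- Correctness of the decoding algorithm for punctured codes.  `C` is a constant
dimension code: all codewords have dimension `k` and pairwise subspace distance at
least `2δ`.  `Q` is a hyperplane of `F_q^n`, `v ∉ Q`.  A codeword `X ∈ C` gives rise to
a punctured codeword `X'` (either `X' = X ⊆ Q`, or `X' = X ⊓ Q` with `v ∈ X`).  Suppose
`Y'` is a subspace of `Q` with `d_S(X', Y') ≤ δ - 1` and let `Z` be defined by the
parity rule: for `δ` even, `Z = span(Y' ∪ {v})` if `dim Y' ≡ k (mod 2)` and `Z = Y'`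
otherwise; for `δ` odd, `Z = Y'` if `dim Y' ≡ k (mod 2)` and `Z = span(Y' ∪ {v})`
otherwise.  Then `d_S(X, Z) ≤ δ - 1`, and `X` is the unique codeword of `C` with this
property, so the minimum-distance decoder of `C` applied to `Z` returns `X`. -/
theorem punctured_decoding_correct (F : Type*) [Field F] [Fintype F] (n k δ : ℕ)
    (C : Set (Submodule F (Fin n → F)))
    (hdim : ∀ X ∈ C, finrank F X = k)
    (hd : ∀ X ∈ C, ∀ Y ∈ C, X ≠ Y → 2 * (δ : ℤ) ≤ subspaceDist X Y)
    (Q : Submodule F (Fin n → F)) (hQ : finrank F Q = n - 1)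
    (v : Fin n → F) (hv : v ∉ Q)
    (X : Submodule F (Fin n → F)) (hX : X ∈ C)
    (X' : Submodule F (Fin n → F))
    (hX' : (X ≤ Q ∧ X' = X) ∨ (v ∈ X ∧ X' = X ⊓ Q))
    (Y' : Submodule F (Fin n → F)) (hY' : Y' ≤ Q)
    (hclose : subspaceDist X' Y' ≤ (δ : ℤ) - 1)
    (Z : Submodule F (Fin n → F))
    (hZ : Z = if (Even δ ↔ finrank F Y' % 2 = k % 2)
              then Y' ⊔ Submodule.span F {v} else Y') :
    subspaceDist X Z ≤ (δ : ℤ) - 1 ∧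
    ∀ W ∈ C, subspaceDist W Z ≤ (δ : ℤ) - 1 → W = X :=
  punctured_decoding_correct_general F n k δ C hdim hd Q hQ v hv X hX X' hX' Y' hY' hclose Z hZ
end
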